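/- The two recurrences e(λ) = (−1)^{λ_r}·e(λ − l̂) + (−1)^{r−1}·λ_r·e(λ − ĉ) (Ku–Wong) and e'(λ) = (−1)^h·e'(λ − ĥ) + (−1)^{h+λ₁}·h·e'(λ − ĉ) (Renteln), both with value 1 on the empty partition, define the same integer-valued function on partitions. -/

import Mathlib

/-!
Both recurrences determine their solution on partitions by induction on `|λ|`, so it suffices to
show that a solution `e` of Renteln's recurrence also satisfies Ku–Wong's. Subtracting the two,
this is the identity
  `(-1)^λ_r e(λ - l̂) = (-1)^h e(λ - ĥ) + (-1)^(r-1) (h - λ_r) e(λ - ĉ)`,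
proved again by induction on `|λ|`. It is trivial for one row and is Renteln's recurrence for
`λ - l̂` when `λ_r = 1`. When `λ_r ≥ 2`, removing the first column removes no row, and the identity
is a linear combination of Renteln's recurrence for `λ - l̂`, Ku–Wong's for `λ - ĥ` and `λ - ĉ`,
and the identity itself for `λ - ĉ`.
-/

def colErase (l : List ℕ) : List ℕ := (l.map (· - 1)).filter (· ≠ 0)

def IsPartition (l : List ℕ) : Prop := l.Pairwise (· ≥ ·) ∧ ∀ x ∈ l, 0 < x

@[simp]
lemma colErase_append (x y : List ℕ) : colErase (x ++ y) = colErase x ++ colErase y := by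
  simp [colErase, List.filter_append]

@[simp]
lemma colErase_singleton_succ (a : ℕ) : colErase [a + 1] = if a = 0 then [] else [a] := by
  simp [colErase, List.filter_singleton]

lemma colErase_eq_map {l : List ℕ} (h : ∀ x ∈ l, 2 ≤ x) : colErase l = l.map (· - 1) :=
  List.filter_eq_self.mpr fun x hx => by
    obtain ⟨y, hy, rfl⟩ := List.mem_map.mp hx
    have := h y hy
    simp only [ne_eq, decide_eq_true_eq]
    omega

namespace IsPartition

variable {l L : List ℕ}

lemma sublist (hp : IsPartition l) (hs : L.Sublist l) : IsPartition L :=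
  ⟨hp.1.sublist hs, fun x hx => hp.2 x (hs.mem hx)⟩

lemma colErase (hp : IsPartition l) : IsPartition (colErase l) :=
  ⟨(hp.1.map (· - 1) fun _ _ h => show _ ≥ _ from Nat.sub_le_sub_right h 1).sublist
      List.filter_sublist,
    fun x hx => Nat.pos_of_ne_zero (by simpa using List.of_mem_filter hx)⟩

lemma last_le {a x : ℕ} (hp : IsPartition (L ++ [a])) (hx : x ∈ L) : a ≤ x :=
  (List.pairwise_append.mp hp.1).2.2 x hx a (List.mem_singleton_self a)

lemma sum_colErase_lt (hp : IsPartition l) (hne : l ≠ []) : (_root_.colErase l).sum < l.sum :=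
  calc (_root_.colErase l).sum ≤ (l.map (· - 1)).sum := List.filter_sublist.sum_le_sum (by simp)
    _ < (l.map id).sum := List.sum_lt_sum _ _ (fun _ _ => Nat.sub_le _ _)
        (by
          obtain ⟨x, hx⟩ := List.exists_mem_of_ne_nil l hne
          exact ⟨x, hx, Nat.sub_lt (hp.2 x hx) Nat.one_pos⟩)
    _ = l.sum := by rw [List.map_id]

end IsPartition

lemma neg_one_pow_add_add_self (b m : ℕ) : (-1 : ℤ) ^ (b + m + b) = (-1) ^ m := by
  rw [show b + m + b = m + 2 * b by ring, pow_add, pow_mul]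
  simp

def hookLength (l : List ℕ) : ℕ := l.headD 0 + l.length - 1

@[simp]
lemma hookLength_cons (b : ℕ) (M : List ℕ) : hookLength (b :: M) = b + M.length := by
  simp [hookLength]

section Recurrences

variable (e : List ℕ → ℤ)

def KuWongAt (l : List ℕ) : Prop :=
  e l = (-1) ^ (l.getLastD 0) * e l.dropLast
    + (-1) ^ (l.length - 1) * (l.getLastD 0 : ℤ) * e (colErase l)

def RentelnAt (l : List ℕ) : Prop :=
  e l = (-1) ^ hookLength l * e (colErase l.tail)
    + (-1) ^ (hookLength l + l.headD 0) * (hookLength l : ℤ) * e (colErase l)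

/-- `(-1)^λ_r e(λ - l̂) = (-1)^h e(λ - ĥ) + (-1)^(r-1) (h - λ_r) e(λ - ĉ)`, the difference of
Renteln's and Ku–Wong's recurrences. -/
def DropLastExpansion (l : List ℕ) : Prop :=
  (-1) ^ (l.getLastD 0) * e l.dropLast
    = (-1) ^ hookLength l * e (colErase l.tail)
      + (-1) ^ (l.length - 1) * ((hookLength l : ℤ) - l.getLastD 0) * e (colErase l)

variable {e}

lemma kuWongAt_concat_iff (L : List ℕ) (a : ℕ) :
    KuWongAt e (L ++ [a]) ↔
      e (L ++ [a]) = (-1) ^ a * e L + (-1) ^ L.length * (a : ℤ) * e (colErase (L ++ [a])) := by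
  simp [KuWongAt]

lemma rentelnAt_cons_iff (b : ℕ) (M : List ℕ) :
    RentelnAt e (b :: M) ↔
      e (b :: M) = (-1) ^ (b + M.length) * e (colErase M)
        + (-1) ^ M.length * ((b + M.length : ℕ) : ℤ) * e (colErase (b :: M)) := by
  simp [RentelnAt, neg_one_pow_add_add_self]

lemma dropLastExpansion_cons_concat_iff (b a : ℕ) (M : List ℕ) :
    DropLastExpansion e (b :: M ++ [a]) ↔
      (-1) ^ a * e (b :: M) = (-1) ^ (b + M.length + 1) * e (colErase (M ++ [a]))
        + (-1) ^ (M.length + 1) * (((b + M.length + 1 : ℕ) : ℤ) - a)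
          * e (colErase (b :: M ++ [a])) := by
  rw [DropLastExpansion, List.getLastD_concat, List.dropLast_concat]
  simp [hookLength, add_assoc]

lemma kuWongAt_of_dropLastExpansion {l : List ℕ} (hne : l ≠ []) (hR : RentelnAt e l)
    (hD : DropLastExpansion e l) : KuWongAt e l := by
  obtain ⟨b, M, rfl⟩ := List.exists_cons_of_ne_nil hne
  simp only [RentelnAt, hookLength_cons, List.headD_cons, neg_one_pow_add_add_self] at hR
  simp only [DropLastExpansion, hookLength_cons] at hD
  rw [KuWongAt]
  simp only [List.length_cons, Nat.add_sub_cancel] at hD ⊢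
  linear_combination hR - hD

lemma dropLastExpansion_singleton (a : ℕ) : DropLastExpansion e [a] := by
  simp [DropLastExpansion, hookLength, colErase]

lemma dropLastExpansion_concat_one {b : ℕ} {M : List ℕ} (hR : RentelnAt e (b :: M)) :
    DropLastExpansion e (b :: M ++ [1]) := by
  rw [rentelnAt_cons_iff] at hR
  rw [dropLastExpansion_cons_concat_iff, colErase_append, colErase_append]
  simp only [colErase_singleton_succ, if_true, List.append_nil]
  push_cast at hR ⊢
  linear_combination -hR

lemma dropLastExpansion_of_two_le {b a : ℕ} {M : List ℕ} (h2 : ∀ x ∈ b :: M, 2 ≤ x)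
    (hR : RentelnAt e (b :: M)) (hKμ : KuWongAt e (colErase (M ++ [a + 2])))
    (hKν : KuWongAt e (colErase (b :: M ++ [a + 2])))
    (hDν : DropLastExpansion e (colErase (b :: M ++ [a + 2]))) :
    DropLastExpansion e (b :: M ++ [a + 2]) := by
  have hb : 1 ≤ b := by linarith [h2 b List.mem_cons_self]
  have hM : colErase M = M.map (· - 1) := colErase_eq_map fun x hx => h2 x (by simp [hx])
  have hbM : colErase (b :: M) = (b - 1) :: M.map (· - 1) := colErase_eq_map h2
  have hμ : colErase (M ++ [a + 2]) = M.map (· - 1) ++ [a + 1] := by simp [hM]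
  have hν : colErase (b :: M ++ [a + 2]) = (b - 1) :: M.map (· - 1) ++ [a + 1] := by
    rw [colErase_append, hbM]; simp
  rw [rentelnAt_cons_iff, hM, hbM] at hR
  rw [hμ, kuWongAt_concat_iff, List.length_map] at hKμ
  rw [hν, kuWongAt_concat_iff] at hKν
  rw [hν, dropLastExpansion_cons_concat_iff] at hDν
  rw [dropLastExpansion_cons_concat_iff, hμ, hν]
  simp only [List.length_cons, List.length_map] at hKν hDν
  rw [show b - 1 + M.length + 1 = b + M.length by omega] at hDν
  push_cast at hR hKμ hKν hDν ⊢
  linear_combination (-1 : ℤ) ^ (a + 2) * hR + (-1 : ℤ) ^ (b + M.length) * hKμ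
    + (-1 : ℤ) ^ M.length * ((b : ℤ) + M.length - a - 1) * hKν
    - ((a + 1 : ℤ) * (-1 : ℤ) ^ M.length) * hDν

theorem dropLastExpansion_of_renteln (hR : ∀ l, IsPartition l → l ≠ [] → RentelnAt e l)
    (l : List ℕ) (hp : IsPartition l) (hne : l ≠ []) : DropLastExpansion e l := by
  have ih (l' : List ℕ) (hp' : IsPartition l') (hne' : l' ≠ []) (_ : l'.sum < l.sum) :
      DropLastExpansion e l' :=
    dropLastExpansion_of_renteln hR l' hp' hne'
  obtain ⟨L, a, rfl⟩ := (List.eq_nil_or_concat' l).resolve_left hne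
  rcases L with _ | ⟨b, M⟩
  · exact dropLastExpansion_singleton a
  have hRbM := hR (b :: M) (hp.sublist (List.sublist_append_left _ _)) (List.cons_ne_nil _ _)
  rcases Nat.lt_or_ge a 2 with ha | ha
  · obtain rfl : a = 1 := by linarith [hp.2 a (by simp)]
    exact dropLastExpansion_concat_one hRbM
  obtain ⟨a, rfl⟩ := Nat.exists_eq_add_of_le' ha
  have h2 (x : ℕ) (hx : x ∈ b :: M) : 2 ≤ x := (hp.last_le hx).trans' (by omega)
  have htail : IsPartition (M ++ [a + 2]) := hp.sublist (List.sublist_cons_self _ _)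
  have hμ := htail.colErase
  have hν := hp.colErase
  have hμne : colErase (M ++ [a + 2]) ≠ [] := by simp
  have hνne : colErase (b :: M ++ [a + 2]) ≠ [] := by rw [colErase_append]; simp
  have hμsum : (colErase (M ++ [a + 2])).sum < (b :: M ++ [a + 2]).sum :=
    (htail.sum_colErase_lt (by simp)).trans (by simpa using hp.2 b (by simp))
  have hνsum : (colErase (b :: M ++ [a + 2])).sum < (b :: M ++ [a + 2]).sum :=
    hp.sum_colErase_lt (by simp)
  have hDμ := ih _ hμ hμne hμsum
  have hDν := ih _ hν hνne hνsum
  exact dropLastExpansion_of_two_le h2 hRbM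
    (kuWongAt_of_dropLastExpansion hμne (hR _ hμ hμne) hDμ)
    (kuWongAt_of_dropLastExpansion hνne (hR _ hν hνne) hDν) hDν
termination_by l.sum

theorem kuWongAt_of_renteln (hR : ∀ l, IsPartition l → l ≠ [] → RentelnAt e l)
    (l : List ℕ) (hp : IsPartition l) (hne : l ≠ []) : KuWongAt e l :=
  kuWongAt_of_dropLastExpansion hne (hR l hp hne) (dropLastExpansion_of_renteln hR l hp hne)

theorem eq_of_kuWongAt {e' : List ℕ → ℤ} (h0 : e [] = e' [])
    (hKW : ∀ l, IsPartition l → l ≠ [] → KuWongAt e l)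
    (hKW' : ∀ l, IsPartition l → l ≠ [] → KuWongAt e' l)
    (l : List ℕ) (hp : IsPartition l) : e l = e' l := by
  rcases eq_or_ne l [] with rfl | hne
  · exact h0
  have hdrop : l.dropLast.sum < l.sum := by
    obtain ⟨L, a, rfl⟩ := (List.eq_nil_or_concat' l).resolve_left hne
    simpa using hp.2 a (by simp)
  have hcol : (colErase l).sum < l.sum := hp.sum_colErase_lt hne
  rw [hKW l hp hne, hKW' l hp hne,
    eq_of_kuWongAt h0 hKW hKW' _ (hp.sublist (List.dropLast_sublist l)),
    eq_of_kuWongAt h0 hKW hKW' _ hp.colErase]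
termination_by l.sum

end Recurrences

theorem stmt_16 (e e' : List ℕ → ℤ) (h0 : e [] = 1) (h0' : e' [] = 1)
    (hKW : ∀ l : List ℕ, IsPartition l → l ≠ [] →
      e l = (-1) ^ (l.getLastD 0) * e l.dropLast
        + (-1) ^ (l.length - 1) * (l.getLastD 0 : ℤ) * e (colErase l))
    (hR : ∀ l : List ℕ, IsPartition l → l ≠ [] →
      e' l = (-1) ^ (l.headD 0 + l.length - 1) * e' (colErase l.tail)
        + (-1) ^ (l.headD 0 + l.length - 1 + l.headD 0)
          * ((l.headD 0 + l.length - 1 : ℕ) : ℤ) * e' (colErase l)) :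
    ∀ l : List ℕ, IsPartition l → e l = e' l :=
  eq_of_kuWongAt (h0.trans h0'.symm) hKW (kuWongAt_of_renteln hR)
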